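/- Let G be a finite triangle-free, (K_1+2K_2)-free, (K_1+C_5)-free, C_6-free graph that is point-incomparable (for any two distinct vertices u,v, neither N(u) ⊆ N(v) nor N(v) ⊆ N(u)). Let x,y be distinct non-adjacent vertices. If the graph G+xy obtained by adding edge xy is still triangle-free, then G+xy contains no induced 6-cycle and no induced copy of K_1+C_5. -/

import Mathlib

/-!
A copy of `C₆` or `K₁ + C₅` in `G + xy` that is not already induced in `G` must use the edge `xy`,
so deleting that edge leaves an induced copy in `G` of `C₆ - e = P₆`, with ends `x` and `y`, or of
`K₁ + C₅ - e = K₁ + P₅`, which contains an induced `K₁ + 2K₂`. Only the path needs an argument: if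
`v₀ ⋯ v₅` is an induced `P₆`, point-incomparability gives `u ~ v₀` with `u ≁ v₂`, and `u ≁ v₁` as
`G` is triangle-free. If `u ≁ v₅`, then `(K₁ + 2K₂)`-freeness (with the edges `v₁v₂`, `v₄v₅`)
forces `u ~ v₄`, so `u ≁ v₃` and `v₀ ⋯ v₄ u` is an induced `C₆`. Hence `u` is a common neighbour
of `x` and `y`, giving a triangle in `G + xy`.
-/

/-- The 6-cycle `C₆`. -/
def C6 : SimpleGraph (ZMod 6) :=
  SimpleGraph.fromRel (fun i j => j = i + 1)

/-- The graph `K₁ + 2K₂`: vertex 0 is isolated, with edges 1-2 and 3-4. -/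
def K1plus2K2 : SimpleGraph (Fin 5) :=
  SimpleGraph.fromRel (fun i j => (i = 1 ∧ j = 2) ∨ (i = 3 ∧ j = 4))

/-- The graph `K₁ + C₅`: vertex 0 is isolated and 1,2,3,4,5 form a 5-cycle. -/
def K1plusC5 : SimpleGraph (Fin 6) :=
  SimpleGraph.fromRel (fun i j =>
    (i = 1 ∧ j = 2) ∨ (i = 2 ∧ j = 3) ∨ (i = 3 ∧ j = 4) ∨ (i = 4 ∧ j = 5) ∨ (i = 5 ∧ j = 1))

open SimpleGraph

instance : DecidableRel C6.Adj := fun a b => decidable_of_iff' _ (fromRel_adj _ a b)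

instance : DecidableRel K1plus2K2.Adj := fun a b => decidable_of_iff' _ (fromRel_adj _ a b)

instance : DecidableRel K1plusC5.Adj := fun a b => decidable_of_iff' _ (fromRel_adj _ a b)

section

variable {V W : Type*} {G : SimpleGraph V} {F : SimpleGraph W}

namespace SimpleGraph

instance (n : ℕ) : DecidableRel (pathGraph n).Adj := fun _ _ => decidable_of_iff' _ pathGraph_adj

theorem CliqueFree.not_adj_of_adj_of_adj (h : G.CliqueFree 3) {a b c : V} (hab : G.Adj a b)
    (hac : G.Adj a c) : ¬G.Adj b c := by
  classical
  exact fun hbc => h {a, b, c} (is3Clique_triple_iff.2 ⟨hab, hac, hbc⟩)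

namespace Embedding

def ofAdjIff (hF : ∀ i j, (∀ k, F.Adj i k ↔ F.Adj j k) → i = j) (f : W → V)
    (hf : ∀ i j, G.Adj (f i) (f j) ↔ F.Adj i j) : F ↪g G where
  toFun := f
  inj' i j hij := hF i j fun k => by rw [← hf, ← hf, hij]
  map_rel_iff' := hf _ _

variable {x y : V}

theorem nonempty_or_exists_map_eq_of_sup_edge (e : F ↪g G ⊔ edge x y) :
    Nonempty (F ↪g G) ∨ ¬G.Adj x y ∧ ∃ a b, F.Adj a b ∧ e a = x ∧ e b = y := by
  by_cases hxy : G.Adj x y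
  · exact .inl ⟨sup_edge_of_adj G hxy ▸ e⟩
  by_cases hab : ∃ a b, F.Adj a b ∧ e a = x ∧ e b = y
  · exact .inr ⟨hxy, hab⟩
  push Not at hab
  refine .inl ⟨{ toEmbedding := e.toEmbedding, map_rel_iff' := fun {i j} => ?_ }⟩
  refine ⟨fun h => e.map_adj_iff.1 (.inl h), fun h => ?_⟩
  rcases e.map_adj_iff.2 h with h' | h'
  · exact h'
  obtain ⟨hi, hj⟩ | ⟨hi, hj⟩ := ((edge_adj ..).1 h').1
  · exact absurd hj (hab i j h hi)
  · exact absurd hi (hab j i h.symm hj)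

def sdiffEdge (e : F ↪g G ⊔ edge x y) (hxy : ¬G.Adj x y) {a b : W} (ha : e a = x)
    (hb : e b = y) : F \ edge a b ↪g G where
  toEmbedding := e.toEmbedding
  map_rel_iff' {i j} := by
    have hG : ∀ u v, G.Adj u v ↔ (G ⊔ edge x y).Adj u v ∧ ¬(edge x y).Adj u v := fun u v => by
      rw [← sdiff_adj, sup_sdiff_right_self, sdiff_edge _ hxy]
    change G.Adj (e i) (e j) ↔ _
    rw [hG, e.map_adj_iff, sdiff_adj]
    simp only [edge_adj, ← ha, ← hb, e.injective.eq_iff, e.injective.ne_iff]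

@[simp]
theorem sdiffEdge_apply (e : F ↪g G ⊔ edge x y) (hxy : ¬G.Adj x y) {a b : W} (ha : e a = x)
    (hb : e b = y) (i : W) : e.sdiffEdge hxy ha hb i = e i :=
  rfl

end Embedding

end SimpleGraph

def C6.isoCycleGraph : C6 ≃g cycleGraph 6 where
  toEquiv := .refl (Fin 6)
  map_rel_iff' {i j} := by revert i j; decide

theorem C6.exists_pathGraph_embedding_sdiff_edge {a b : ZMod 6} (hab : C6.Adj a b) :
    ∃ p : pathGraph 6 ↪g C6 \ edge a b, p 0 = a ∧ p 5 = b := by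
  -- walk around the hexagon away from `b`
  have key : ∀ a b : ZMod 6, C6.Adj a b → (∀ i j : Fin 6,
      (C6 \ edge a b).Adj (a - (b - a) * (i : ℕ)) (a - (b - a) * (j : ℕ)) ↔
        (pathGraph 6).Adj i j) ∧ a - (b - a) * (0 : ℕ) = a ∧ a - (b - a) * (5 : ℕ) = b := by
    simp only [sdiff_adj, edge_adj]
    decide
  obtain ⟨hadj, h0, h5⟩ := key a b hab
  exact ⟨.ofAdjIff (by decide) _ hadj, h0, h5⟩

theorem K1plusC5.nonempty_K1plus2K2_embedding_sdiff_edge {a b : Fin 6} (hab : K1plusC5.Adj a b) :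
    Nonempty (K1plus2K2 ↪g K1plusC5 \ edge a b) := by
  -- `r` and `p` are the other cycle neighbours of `a` and `b`
  have key : ∀ a b : Fin 6, K1plusC5.Adj a b → ∃ r p : Fin 6, ∀ i j : Fin 5,
      (K1plusC5 \ edge a b).Adj (![0, a, r, b, p] i) (![0, a, r, b, p] j) ↔ K1plus2K2.Adj i j := by
    simp only [sdiff_adj, edge_adj]
    decide
  obtain ⟨r, p, h⟩ := key a b hab
  exact ⟨.ofAdjIff (by decide) _ h⟩

theorem exists_adj_adj_of_pathGraph_embedding (hK3 : G.CliqueFree 3)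
    (hK1plus2K2 : ¬Nonempty (K1plus2K2 ↪g G)) (hC6 : ¬Nonempty (C6 ↪g G))
    (hpi : ∀ u v : V, u ≠ v → ¬G.neighborSet u ⊆ G.neighborSet v) (p : pathGraph 6 ↪g G) :
    ∃ w, G.Adj (p 0) w ∧ G.Adj (p 5) w := by
  obtain ⟨u, hu0, hu2⟩ := Set.not_subset.1 (hpi (p 0) (p 2) (p.injective.ne (by decide)))
  rw [mem_neighborSet] at hu0 hu2
  by_contra! hu5
  replace hu5 := hu5 u hu0
  have hu1 : ¬G.Adj (p 1) u := hK3.not_adj_of_adj_of_adj (p.map_adj_iff.2 (by decide)) hu0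
  have hu4 : G.Adj (p 4) u := by
    by_contra hu4
    refine hK1plus2K2 ⟨.ofAdjIff (by decide) ![u, p 1, p 2, p 4, p 5] fun i j => ?_⟩
    fin_cases i <;> fin_cases j <;> simp +decide [G.adj_comm u, hu1, hu2, hu4, hu5]
  have hu3 : ¬G.Adj (p 3) u := hK3.not_adj_of_adj_of_adj (p.map_adj_iff.2 (by decide)) hu4
  refine hC6 ⟨(Embedding.ofAdjIff (by decide) ![p 0, p 1, p 2, p 3, p 4, u] fun i j => ?_).comp
    C6.isoCycleGraph.toEmbedding⟩
  fin_cases i <;> fin_cases j <;> simp +decide [G.adj_comm u, hu0, hu1, hu2, hu3, hu4]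

end

theorem addEdge_C6_K1plusC5_free_general {V : Type*} (G : SimpleGraph V)
    (hK3 : G.CliqueFree 3)
    (hK1plus2K2 : ¬ Nonempty (K1plus2K2 ↪g G))
    (hK1plusC5 : ¬ Nonempty (K1plusC5 ↪g G))
    (hC6 : ¬ Nonempty (C6 ↪g G))
    (hpi : ∀ u v : V, u ≠ v → ¬ (G.neighborSet u ⊆ G.neighborSet v))
    (x y : V)
    (htf : (G ⊔ SimpleGraph.fromEdgeSet {s(x, y)}).CliqueFree 3) :
    (¬ Nonempty (C6 ↪g (G ⊔ SimpleGraph.fromEdgeSet {s(x, y)}))) ∧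
    (¬ Nonempty (K1plusC5 ↪g (G ⊔ SimpleGraph.fromEdgeSet {s(x, y)}))) := by
  change (G ⊔ edge x y).CliqueFree 3 at htf
  change ¬Nonempty (C6 ↪g G ⊔ edge x y) ∧ ¬Nonempty (K1plusC5 ↪g G ⊔ edge x y)
  refine ⟨fun ⟨e⟩ => ?_, fun ⟨e⟩ => ?_⟩
  · obtain hG | ⟨hxy, a, b, hab, hx, hy⟩ := e.nonempty_or_exists_map_eq_of_sup_edge
    · exact hC6 hG
    obtain ⟨p, hp0, hp5⟩ := C6.exists_pathGraph_embedding_sdiff_edge hab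
    obtain ⟨w, hw0, hw5⟩ := exists_adj_adj_of_pathGraph_embedding hK3 hK1plus2K2 hC6 hpi
      ((e.sdiffEdge hxy hx hy).comp p)
    simp only [Embedding.coe_comp, Function.comp_apply, hp0, hp5, Embedding.sdiffEdge_apply, hx,
      hy] at hw0 hw5
    have hH : (G ⊔ edge x y).Adj x y := by simpa only [hx, hy] using e.map_adj_iff.2 hab
    exact htf.not_adj_of_adj_of_adj hH (.inl hw0) (.inl hw5)
  · obtain hG | ⟨hxy, a, b, hab, hx, hy⟩ := e.nonempty_or_exists_map_eq_of_sup_edge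
    · exact hK1plusC5 hG
    obtain ⟨f⟩ := K1plusC5.nonempty_K1plus2K2_embedding_sdiff_edge hab
    exact hK1plus2K2 ⟨(e.sdiffEdge hxy hx hy).comp f⟩

theorem addEdge_C6_K1plusC5_free {V : Type*} [Fintype V] (G : SimpleGraph V)
    (hK3 : G.CliqueFree 3)
    (hK1plus2K2 : ¬ Nonempty (K1plus2K2 ↪g G))
    (hK1plusC5 : ¬ Nonempty (K1plusC5 ↪g G))
    (hC6 : ¬ Nonempty (C6 ↪g G))
    (hpi : ∀ u v : V, u ≠ v → ¬ (G.neighborSet u ⊆ G.neighborSet v))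
    (x y : V) (hxy : x ≠ y) (hnadj : ¬ G.Adj x y)
    (htf : (G ⊔ SimpleGraph.fromEdgeSet {s(x, y)}).CliqueFree 3) :
    (¬ Nonempty (C6 ↪g (G ⊔ SimpleGraph.fromEdgeSet {s(x, y)}))) ∧
    (¬ Nonempty (K1plusC5 ↪g (G ⊔ SimpleGraph.fromEdgeSet {s(x, y)}))) :=
  addEdge_C6_K1plusC5_free_general G hK3 hK1plus2K2 hK1plusC5 hC6 hpi x y htf
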